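/- arXiv:1905.05688 — 4 statements merged into one kernel-verified Lean document; each statement's English description precedes it below -/
import Mathlib

section
/- If a is an element of a finite length Λ-module B and the height sequence (h(p^i a))_i of a has a gap after m_ℓ (i.e. h(p^{ℓ+1}a) > h(p^ℓ a)+1), then Λ/(p^{m_ℓ+1}) occurs as a direct summand of B. -/
/-!
Over a discrete valuation ring, `B` is isomorphic to a product of cyclic modules `Λ ⧸ (p ^ e)`,
and heights are computed componentwise. Since `b = p ^ ℓ • a` has height `m`, some component
of `b` is `p ^ m • u` with `p ∤ u`. In `Λ ⧸ (p ^ e)` with `e ≥ m + 2`, the element `p ^ (m + 1) • u`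
would still have height exactly `m + 1`, contradicting `h(p • b) ≥ m + 2`; and `e ≤ m` would
make the component vanish. So that factor is `Λ ⧸ (p ^ (m + 1))`, a direct summand of `B`.
-/

/-- `b` lies in `p^m B`, i.e. the height of `b` is at least `m`. -/
def inPow {Λ B : Type} [CommRing Λ] [AddCommGroup B] [Module Λ B]
    (p : Λ) (m : ℕ) (b : B) : Prop := ∃ c, b = p ^ m • c

/-- The height of `b` is exactly `m`: `b ∈ p^m B \ p^{m+1} B`. -/
def heightIs {Λ B : Type} [CommRing Λ] [AddCommGroup B] [Module Λ B]
    (p : Λ) (b : B) (m : ℕ) : Prop := inPow p m b ∧ ¬ inPow p (m + 1) b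

section Height

variable {Λ : Type} [CommRing Λ] {p : Λ} {k : ℕ}

lemma inPow_map_linearEquiv_iff {B C : Type} [AddCommGroup B] [Module Λ B] [AddCommGroup C]
    [Module Λ C] (f : B ≃ₗ[Λ] C) {b : B} : inPow p k (f b) ↔ inPow p k b := by
  constructor
  · rintro ⟨c, hc⟩
    exact ⟨f.symm c, f.injective (by simp [hc])⟩
  · rintro ⟨c, rfl⟩
    exact ⟨f c, map_smul f _ c⟩

lemma inPow_pi_iff {ι : Type} {M : ι → Type} [∀ i, AddCommGroup (M i)] [∀ i, Module Λ (M i)]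
    {x : ∀ i, M i} : inPow p k x ↔ ∀ i, inPow p k (x i) := by
  constructor
  · rintro ⟨c, rfl⟩ i
    exact ⟨c i, rfl⟩
  · intro h
    choose c hc using h
    exact ⟨c, funext hc⟩

lemma eq_add_one_of_heightIs_of_inPow_smul [IsDomain Λ] (hp : p ≠ 0) {e m : ℕ}
    {x : Λ ⧸ Ideal.span {p ^ e}} (h1 : heightIs p x m) (h2 : inPow p (m + 2) (p • x)) :
    e = m + 1 := by
  have smul_mk (r y : Λ) : r • Ideal.Quotient.mk (Ideal.span {p ^ e}) y =
      Ideal.Quotient.mk _ (r * y) := rfl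
  obtain ⟨c, rfl⟩ := h1.1
  obtain ⟨u, rfl⟩ := Ideal.Quotient.mk_surjective c
  have hle : m + 1 ≤ e := by
    by_contra! h
    refine h1.2 ⟨0, ?_⟩
    rw [smul_zero, smul_mk, Ideal.Quotient.eq_zero_iff_dvd]
    exact (pow_dvd_pow p (by omega)).mul_right u
  by_contra hne
  obtain ⟨z, hz⟩ := h2
  obtain ⟨w, rfl⟩ := Ideal.Quotient.mk_surjective z
  rw [smul_mk, smul_mk, smul_mk, Ideal.Quotient.eq, Ideal.mem_span_singleton] at hz
  have hdvd : p ^ (m + 1) * p ∣ p ^ (m + 1) * u := by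
    rw [← pow_succ, show p ^ (m + 1) * u = p * (p ^ m * u) by ring,
      ← dvd_sub_left (dvd_mul_right _ w)]
    exact (pow_dvd_pow p (by omega)).trans hz
  obtain ⟨v, rfl⟩ := (mul_dvd_mul_iff_left (pow_ne_zero _ hp)).1 hdvd
  exact h1.2 ⟨Ideal.Quotient.mk _ v, by rw [smul_mk, smul_mk]; ring_nf⟩

end Height

section Summand

variable {R : Type*} [CommRing R] {B M : Type*} [AddCommGroup B] [Module R B]
  [AddCommGroup M] [Module R M]

lemma exists_isCompl_linearEquiv_of_comp_eq_id {s : M →ₗ[R] B} {r : B →ₗ[R] M}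
    (h : r ∘ₗ s = LinearMap.id) :
    ∃ N N' : Submodule R B, IsCompl N N' ∧ Nonempty (N ≃ₗ[R] M) := by
  have hrs : Function.LeftInverse r s := LinearMap.congr_fun h
  have hidem : IsIdempotentElem (s ∘ₗ r) := by
    ext x
    simp [hrs (r x)]
  refine ⟨LinearMap.range s, LinearMap.ker r, ?_, ⟨(LinearEquiv.ofLeftInverse hrs).symm⟩⟩
  rw [← LinearMap.range_comp_of_range_eq_top s (LinearMap.range_eq_top.2 hrs.surjective),
    ← LinearMap.ker_comp_of_ker_eq_bot r (LinearMap.ker_eq_bot.2 hrs.injective)]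
  exact LinearMap.IsIdempotentElem.isCompl hidem

lemma exists_isCompl_linearEquiv_of_linearEquiv_pi {ι : Type*} {M : ι → Type*}
    [∀ i, AddCommGroup (M i)] [∀ i, Module R (M i)] (f : B ≃ₗ[R] ∀ i, M i) (i : ι) :
    ∃ N N' : Submodule R B, IsCompl N N' ∧ Nonempty (N ≃ₗ[R] M i) := by
  classical
  refine exists_isCompl_linearEquiv_of_comp_eq_id (s := f.symm ∘ₗ LinearMap.single R M i)
    (r := LinearMap.proj i ∘ₗ f) ?_
  ext x
  simp

end Summand

section DVR

variable {Λ : Type} [CommRing Λ] [IsDomain Λ] [IsDiscreteValuationRing Λ] {p : Λ}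
  {B : Type} [AddCommGroup B] [Module Λ B]

lemma exists_linearEquiv_pi_quotient_span_pow (hp : Irreducible p) [Module.Finite Λ B]
    (htor : Module.IsTorsion Λ B) :
    ∃ (ι : Type) (e : ι → ℕ), Nonempty (B ≃ₗ[Λ] ∀ i, Λ ⧸ Ideal.span {p ^ e i}) := by
  classical
  obtain ⟨ι, _, q, hq, e, ⟨f⟩⟩ := Module.equiv_directSum_of_isTorsion htor
  have hspan (i : ι) : (Λ ∙ q i ^ e i) = Ideal.span {p ^ e i} :=
    Ideal.span_singleton_eq_span_singleton.2
      (IsDiscreteValuationRing.associated_of_irreducible Λ (hq i) hp).pow_pow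
  exact ⟨ι, e, ⟨f.trans ((DirectSum.linearEquivFunOnFintype Λ ι _).trans
    (LinearEquiv.piCongrRight fun i => Submodule.quotEquivOfEq _ _ (hspan i)))⟩⟩

lemma exists_isCompl_quotient_of_heightIs_of_inPow_smul (hp : Irreducible p)
    [Module.Finite Λ B] (htor : Module.IsTorsion Λ B) {b : B} {m : ℕ}
    (h1 : heightIs p b m) (h2 : inPow p (m + 2) (p • b)) :
    ∃ N N' : Submodule Λ B, IsCompl N N' ∧
      Nonempty (N ≃ₗ[Λ] Λ ⧸ Ideal.span {p ^ (m + 1)}) := by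
  obtain ⟨ι, e, ⟨f⟩⟩ := exists_linearEquiv_pi_quotient_span_pow hp htor
  obtain ⟨i, hi⟩ : ∃ i, ¬ inPow p (m + 1) (f b i) := by
    by_contra! h
    exact h1.2 ((inPow_map_linearEquiv_iff f).1 (inPow_pi_iff.2 h))
  have hm : inPow p m (f b i) := inPow_pi_iff.1 ((inPow_map_linearEquiv_iff f).2 h1.1) i
  have hpm : inPow p (m + 2) (p • f b i) := by
    rw [← Pi.smul_apply, ← map_smul]
    exact inPow_pi_iff.1 ((inPow_map_linearEquiv_iff f).2 h2) i
  have hei := eq_add_one_of_heightIs_of_inPow_smul hp.ne_zero ⟨hm, hi⟩ hpm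
  obtain ⟨N, N', hNN', ⟨g⟩⟩ := exists_isCompl_linearEquiv_of_linearEquiv_pi f i
  exact ⟨N, N', hNN', ⟨g.trans (Submodule.quotEquivOfEq _ _ (by rw [hei]))⟩⟩

end DVR

/-- Kaplansky's Lemma 22: if the height sequence of `a ∈ B` has a gap after
`m_ℓ = h(p^ℓ a)` (i.e. `h(p^{ℓ+1} a) > m_ℓ + 1`, which includes the case
`p^{ℓ+1} a = 0`), then `Λ/(p^{m_ℓ+1})` occurs as a direct summand of `B`. -/
theorem stmt1 (Λ : Type) [CommRing Λ] [IsDomain Λ] [IsDiscreteValuationRing Λ]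
    (p : Λ) (hp : Irreducible p)
    (B : Type) [AddCommGroup B] [Module Λ B] [Module.Finite Λ B]
    (htor : Module.IsTorsion Λ B)
    (a : B) (ℓ m : ℕ)
    (h1 : heightIs p (p ^ ℓ • a) m)
    (h2 : inPow p (m + 2) (p ^ (ℓ + 1) • a)) :
    ∃ N N' : Submodule Λ B, IsCompl N N' ∧
      Nonempty (N ≃ₗ[Λ] Λ ⧸ Ideal.span {p ^ (m + 1)}) := by
  rw [pow_succ', mul_smul] at h2
  exact exists_isCompl_quotient_of_heightIs_of_inPow_smul hp htor h1 h2
end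

section
/- For a cyclic embedding ((a) ⊆ B) with height sequence (m_i) of a, the entry e of the associated LR-tableau occurs in row m_{e-1}+1. Equivalently, for each e and each m, the lengths of B/(p^{e-1}A + p^m B) and B/(p^e A + p^m B) agree if m ≤ m_{e-1} and differ otherwise. -/
/-!
The Krull dimension of the submodule lattice of `B ⧸ N` is the length of `B ⧸ N`, i.e. the
coheight of `N`; since `B` is a finitely generated torsion module over a DVR it has finite length,
so the two lengths agree iff the submodules `p^e A + p^mm B ⊇ p^{e+1} A + p^mm B` agree. Over a
local ring, `(b) + L = (p b) + L` iff `b ∈ L`, because `1 - r p` is a unit. With `b = p^e a` and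
`L = p^mm B` this says `p^e a ∈ p^mm B`, i.e. `mm ≤ m e` by definition of the height.
-/

section Height

variable {Λ B : Type} [CommRing Λ] [AddCommGroup B] [Module Λ B] {p : Λ} {b : B} {k n : ℕ}

theorem inPow_iff_mem_ideal_span_smul_top :
    inPow p n b ↔ b ∈ Ideal.span {p ^ n} • (⊤ : Submodule Λ B) := by
  simp only [inPow, Submodule.ideal_span_singleton_smul, Submodule.mem_smul_pointwise_iff_exists,
    Submodule.mem_top, true_and, eq_comm]

theorem inPow.of_le (h : inPow p k b) (hnk : n ≤ k) : inPow p n b := by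
  obtain ⟨c, rfl⟩ := h
  exact ⟨p ^ (k - n) • c, by rw [smul_smul, ← pow_add, Nat.add_sub_cancel' hnk]⟩

theorem heightIs.inPow_iff (h : heightIs p b k) : inPow p n b ↔ n ≤ k :=
  ⟨fun hn => by_contra fun hnk => h.2 (hn.of_le (by omega)), h.1.of_le⟩

end Height

theorem IsLocalRing.span_singleton_sup_eq_iff {R M : Type*} [CommRing R] [IsLocalRing R]
    [AddCommGroup M] [Module R M] {x : R} (hx : ¬IsUnit x) (b : M) (L : Submodule R M) :
    Submodule.span R {b} ⊔ L = Submodule.span R {x • b} ⊔ L ↔ b ∈ L := by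
  refine ⟨fun h => ?_, fun hb => by
    rw [sup_eq_right.mpr ((Submodule.span_singleton_le_iff_mem _ _).mpr hb),
      sup_eq_right.mpr ((Submodule.span_singleton_le_iff_mem _ _).mpr (L.smul_mem x hb))]⟩
  obtain ⟨_, hy, l, hl, hyl⟩ :=
    Submodule.mem_sup.mp (h ▸ Submodule.mem_sup_left (Submodule.mem_span_singleton_self b))
  obtain ⟨r, rfl⟩ := Submodule.mem_span_singleton.mp hy
  have hu : IsUnit (1 - r * x) :=
    (isUnit_or_isUnit_one_sub_self (r * x)).resolve_left fun hrx =>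
      hx (isUnit_of_mul_isUnit_right hrx)
  have : (1 - r * x) • b = l := by
    rw [sub_smul, one_smul, mul_smul, sub_eq_iff_eq_add', hyl]
  exact (Submodule.smul_mem_iff_of_isUnit L hu).mp (this ▸ hl)

theorem Module.IsTorsion.isArtinian {R M : Type*} [CommRing R] [IsNoetherianRing R]
    [Ring.KrullDimLE 1 R] [AddCommGroup M] [Module R M] [Module.Finite R M]
    (hM : Module.IsTorsion R M) : IsArtinian R M := by
  obtain ⟨x, hx, hx0⟩ := Submodule.annihilator_top_inter_nonZeroDivisors hM
  have : IsArtinianRing (R ⧸ Ideal.span {x}) := by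
    rw [isArtinianRing_iff_krullDimLE_zero, Ring.KrullDimLE, Order.krullDimLE_iff,
      ← ENat.WithBot.add_le_add_one_right_iff, Nat.cast_zero, zero_add]
    exact (ringKrullDim_quotient_succ_le_of_nonZeroDivisor hx0).trans
      Order.KrullDimLE.krullDim_le
  have hI : Module.IsTorsionBySet R M (Ideal.span {x}) :=
    (Module.isTorsionBySet_iff_is_torsion_by_span _).mp <|
      (Module.isTorsionBySet_singleton_iff x).mpr fun m =>
        Submodule.mem_annihilator.mp hx m trivial
  let := hI.module
  have : IsScalarTower R (R ⧸ Ideal.span {x}) M := hI.isScalarTower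
  have : Module.Finite (R ⧸ Ideal.span {x}) M := Module.Finite.of_restrictScalars_finite R _ _
  exact isArtinian_of_surjective_algebraMap (Ideal.Quotient.mk_surjective (I := Ideal.span {x}))

theorem krullDim_submodule_quotient_eq_iff_of_le {R M : Type*} [Ring R] [AddCommGroup M]
    [Module R M] [IsArtinian R M] [IsNoetherian R M] {N₁ N₂ : Submodule R M}
    (h : N₂ ≤ N₁) :
    Order.krullDim (Submodule R (M ⧸ N₁)) = Order.krullDim (Submodule R (M ⧸ N₂)) ↔
      N₁ = N₂ := by
  refine ⟨fun hdim => by_contra fun hne => ?_, fun hN => hN ▸ rfl⟩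
  rw [← Module.coe_length, ← Module.coe_length, Module.length_quotient, Module.length_quotient,
    WithBot.coe_inj] at hdim
  exact (Order.coheight_strictAnti (lt_of_le_of_ne h (Ne.symm hne))
    (Order.coheight_lt_top _)).ne hdim

theorem stmt8_general (Λ : Type) [CommRing Λ] [IsDomain Λ] [IsDiscreteValuationRing Λ]
    (p : Λ) (hp : Irreducible p)
    (B : Type) [AddCommGroup B] [Module Λ B] [Module.Finite Λ B]
    (htor : Module.IsTorsion Λ B)
    (a : B) (r : ℕ) (m : ℕ → ℕ)
    (hgt : ∀ i < r, heightIs p (p ^ i • a) (m i)) :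
    ∀ e mm : ℕ, e < r →
      (Order.krullDim (Submodule Λ (B ⧸ (Ideal.span {p ^ e} • Submodule.span Λ {a}
            ⊔ Ideal.span {p ^ mm} • (⊤ : Submodule Λ B)))) =
        Order.krullDim (Submodule Λ (B ⧸ (Ideal.span {p ^ (e + 1)} • Submodule.span Λ {a}
            ⊔ Ideal.span {p ^ mm} • (⊤ : Submodule Λ B)))) ↔ mm ≤ m e) := by
  intro e mm he
  have := htor.isArtinian
  have hspan (k : ℕ) :
      Ideal.span {p ^ k} • Submodule.span Λ {a} = Submodule.span Λ {p ^ k • a} := by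
    rw [Submodule.ideal_span_singleton_smul, Submodule.smul_span, Set.smul_set_singleton]
  have hsucc : p ^ (e + 1) • a = p • p ^ e • a := by rw [pow_succ', mul_smul]
  have hle : Submodule.span Λ {p • p ^ e • a} ≤ Submodule.span Λ {p ^ e • a} :=
    (Submodule.span_singleton_le_iff_mem _ _).mpr
      (Submodule.smul_mem _ p (Submodule.mem_span_singleton_self _))
  rw [hspan, hspan, hsucc, krullDim_submodule_quotient_eq_iff_of_le (sup_le_sup_right hle _),
    IsLocalRing.span_singleton_sup_eq_iff hp.not_isUnit, ← inPow_iff_mem_ideal_span_smul_top,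
    (hgt e he).inPow_iff]

/-- For a cyclic embedding `((a) ⊆ B)` with height sequence `(m i)` of `a`, the
entry `e + 1` of the associated LR-tableau occurs in row `m e + 1`:
for each `e < r` and each `mm`, the lengths (Krull dimensions of the submodule
lattices) of `B/(p^e A + p^mm B)` and `B/(p^{e+1} A + p^mm B)` agree if and
only if `mm ≤ m e`. -/
theorem stmt8 (Λ : Type) [CommRing Λ] [IsDomain Λ] [IsDiscreteValuationRing Λ]
    (p : Λ) (hp : Irreducible p)
    (B : Type) [AddCommGroup B] [Module Λ B] [Module.Finite Λ B]
    (htor : Module.IsTorsion Λ B)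
    (a : B) (r : ℕ) (m : ℕ → ℕ) (hr : p ^ r • a = 0)
    (hgt : ∀ i < r, heightIs p (p ^ i • a) (m i)) :
    ∀ e mm : ℕ, e < r →
      (Order.krullDim (Submodule Λ (B ⧸ (Ideal.span {p ^ e} • Submodule.span Λ {a}
            ⊔ Ideal.span {p ^ mm} • (⊤ : Submodule Λ B)))) =
        Order.krullDim (Submodule Λ (B ⧸ (Ideal.span {p ^ (e + 1)} • Submodule.span Λ {a}
            ⊔ Ideal.span {p ^ mm} • (⊤ : Submodule Λ B)))) ↔ mm ≤ m e) :=
  stmt8_general Λ p hp B htor a r m hgt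
end

section
/- The number of LR-tableaux with outer shape β in which every entry occurs exactly once equals ∏_i (1 + β_i − β_{i+1}): in such a tableau, each entry must be the rightmost box of its row, and the number of entries placed in column i may be any value from 0 to β_i − β_{i+1} (columns counted by distinct column lengths), these choices being independent. -/
/-- A (skew) Littlewood-Richardson tableau: `outer` and `inner` are the row
lengths of the outer shape `β` and the inner (empty) shape `γ`; the box in
row `r` (0-indexed from the top) and column `c` (0-indexed) belongs to the
diagram iff `c < outer r`, and it is a filled box of the skew region `β\γ` iff
moreover `inner r ≤ c`; filled boxes carry positive entries which increase
weakly along rows, strictly down columns, and which satisfy the lattice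
permutation property: weakly to the right of every column there are at least
as many entries `e` as entries `e+1`. -/
structure LRTableau where
  outer : ℕ → ℕ
  inner : ℕ → ℕ
  outer_anti : Antitone outer
  inner_anti : Antitone inner
  inner_le : ∀ r, inner r ≤ outer r
  finite : ∃ N, ∀ r, N ≤ r → outer r = 0
  entry : ℕ × ℕ → ℕ
  entry_zero : ∀ b : ℕ × ℕ, ¬(inner b.1 ≤ b.2 ∧ b.2 < outer b.1) → entry b = 0
  entry_pos : ∀ b : ℕ × ℕ, inner b.1 ≤ b.2 → b.2 < outer b.1 → 1 ≤ entry b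
  row_weak : ∀ r c c' : ℕ, inner r ≤ c → c ≤ c' → c' < outer r →
    entry (r, c) ≤ entry (r, c')
  col_strict : ∀ r r' c : ℕ, r < r' → inner r ≤ c → c < outer r →
    inner r' ≤ c → c < outer r' → entry (r, c) < entry (r', c)
  lattice : ∀ c e : ℕ, 1 ≤ e →
    Set.ncard {b : ℕ × ℕ | inner b.1 ≤ b.2 ∧ b.2 < outer b.1 ∧ c ≤ b.2 ∧
        entry b = e + 1} ≤
      Set.ncard {b : ℕ × ℕ | inner b.1 ≤ b.2 ∧ b.2 < outer b.1 ∧ c ≤ b.2 ∧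
        entry b = e}

/-- `b` is a filled box of the tableau `T`. -/
def LRTableau.Mem (T : LRTableau) (b : ℕ × ℕ) : Prop :=
  T.inner b.1 ≤ b.2 ∧ b.2 < T.outer b.1

/-!
Let the columns of the diagram have heights `β 0 ≥ β 1 ≥ ⋯` and let `T` be an LR tableau with
entries `1, …, n`, each occurring once. The lattice condition puts the box of `e + 1` weakly to the
left of the box of `e`. Hence no row contains two filled boxes (the right one would carry the larger
entry), so every filled box is the last box of its row, and the entries increase along the reading
order: columns from right to left, each column from top to bottom. In column `c` the boxes ending a
row are the `β c - β (c + 1)` lowest ones, and since the unfilled part of the diagram is itself a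
diagram, the filled boxes of column `c` are the lowest `F c` of them. Thus `T` is determined by the
numbers `0 ≤ F c ≤ β c - β (c + 1)`, and conversely every such choice, numbered along the reading
order, is an LR tableau.
-/

open Finset

theorem Set.BijOn.ncard_setOf_lt_add_one {α : Type*} {s : Set α} {e : α → ℕ} {n : ℕ}
    (h : Set.BijOn e s (Set.Icc 1 n)) {a : α} (ha : a ∈ s) :
    {x | x ∈ s ∧ e x < e a}.ncard + 1 = e a := by
  have hea := h.mapsTo ha
  have himage : e '' {x | x ∈ s ∧ e x < e a} = Set.Ico 1 (e a) := by
    ext y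
    constructor
    · rintro ⟨x, ⟨hx, hlt⟩, rfl⟩
      exact ⟨(h.mapsTo hx).1, hlt⟩
    · rintro ⟨h1, hlt⟩
      obtain ⟨x, hx, rfl⟩ := h.surjOn ⟨h1, hlt.le.trans hea.2⟩
      exact ⟨x, ⟨hx, hlt⟩, rfl⟩
  rw [← (h.injOn.mono fun x hx => hx.1).ncard_image, himage, Set.ncard_Ico_nat]
  have := hea.1
  omega

theorem Monotone.iff_sub_card_filter_Ico_le {p : ℕ → Prop} [DecidablePred p] (hp : Monotone p)
    {a b x : ℕ} (hx : x ∈ Ico a b) : p x ↔ b - #{y ∈ Ico a b | p y} ≤ x := by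
  rw [mem_Ico] at hx
  constructor
  · intro hpx
    have hsub : Ico x b ⊆ {y ∈ Ico a b | p y} := fun y hy => by
      rw [mem_Ico] at hy
      exact mem_filter.2 ⟨mem_Ico.2 ⟨by omega, hy.2⟩, hp hy.1 hpx⟩
    have := card_le_card hsub
    rw [Nat.card_Ico] at this
    omega
  · intro hle
    by_contra hpx
    have hsub : {y ∈ Ico a b | p y} ⊆ Ico (x + 1) b := fun y hy => by
      rw [mem_filter, mem_Ico] at hy
      refine mem_Ico.2 ⟨?_, hy.1.2⟩
      by_contra hyx
      exact hpx (hp (by omega) hy.2)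
    have := card_le_card hsub
    rw [Nat.card_Ico] at this
    omega

namespace LRTableau

section Shape

variable {nn : ℕ} (β : Fin nn → ℕ)

def colHeight (c : ℕ) : ℕ := if h : c < nn then β ⟨c, h⟩ else 0

def rowLength (r : ℕ) : ℕ := #(univ.filter fun i => r < β i)

variable {β}

theorem colHeight_eq_zero {c : ℕ} (h : nn ≤ c) : colHeight β c = 0 := dif_neg (not_lt.2 h)

theorem colHeight_antitone (hβ : Antitone β) : Antitone (colHeight β) := by
  intro c c' h
  unfold colHeight
  split_ifs with h1 h2
  · exact hβ (Fin.mk_le_mk.2 h)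
  · omega
  · exact Nat.zero_le _
  · exact le_rfl

theorem rowLength_antitone : Antitone (rowLength β) := fun _ _ h =>
  card_le_card (monotone_filter_right _ fun _ _ => h.trans_lt)

theorem lt_rowLength_iff (hβ : Antitone β) {r c : ℕ} :
    c < rowLength β r ↔ r < colHeight β c := by
  unfold colHeight rowLength
  split_ifs with hc
  · constructor
    · intro h
      by_contra hr
      have hsub : univ.filter (fun i => r < β i) ⊆ Iio (⟨c, hc⟩ : Fin nn) := fun i hi => by
        rw [mem_filter] at hi
        by_contra hic
        exact hr (hi.2.trans_le (hβ (not_lt.1 (mt mem_Iio.2 hic))))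
      have := card_le_card hsub
      rw [Fin.card_Iio, Fin.val_mk] at this
      omega
    · intro h
      have hsub : Iic (⟨c, hc⟩ : Fin nn) ⊆ univ.filter fun i => r < β i := fun i hi =>
        mem_filter.2 ⟨mem_univ _, h.trans_le (hβ (mem_Iic.1 hi))⟩
      have := card_le_card hsub
      rw [Fin.card_Iic, Fin.val_mk] at this
      omega
  · have := card_filter_le (univ : Finset (Fin nn)) fun i => r < β i
    rw [card_univ, Fintype.card_fin] at this
    omega

end Shape

def readingKey (b : ℕ × ℕ) : ℕᵒᵈ ×ₗ ℕ := toLex (OrderDual.toDual b.2, b.1)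

theorem readingKey_lt_readingKey {b b' : ℕ × ℕ} :
    readingKey b < readingKey b' ↔ b'.2 < b.2 ∨ b.2 = b'.2 ∧ b.1 < b'.1 := by
  simp only [readingKey, Prod.Lex.toLex_lt_toLex, OrderDual.toDual_lt_toDual]
  rfl

theorem readingKey_injective : Function.Injective readingKey := fun b b' h => by
  simpa [readingKey, Prod.ext_iff, and_comm] using h

theorem ext {T U : LRTableau} (houter : T.outer = U.outer) (hinner : T.inner = U.inner)
    (hentry : T.entry = U.entry) : T = U := by
  cases T
  cases U
  dsimp only at houter hinner hentry
  subst houter hinner hentry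
  rfl

theorem inner_eq_of_mem_iff {T U : LRTableau} (houter : T.outer = U.outer)
    (hmem : ∀ b, T.Mem b ↔ U.Mem b) : T.inner = U.inner := by
  have key : ∀ {T U : LRTableau}, T.outer = U.outer → (∀ b, T.Mem b ↔ U.Mem b) →
      ∀ r, T.inner r ≤ U.inner r := by
    intro T U houter hmem r
    by_contra! h
    have hU : U.Mem (r, U.inner r) := ⟨le_rfl, by
      have := T.inner_le r
      rw [houter] at this
      exact h.trans_le this⟩
    exact absurd ((hmem _).2 hU).1 (not_le.2 h)
  exact funext fun r => le_antisymm (key houter hmem r)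
    (key houter.symm (fun b => (hmem b).symm) r)

def IsStandard (T : LRTableau) (n : ℕ) : Prop :=
  Set.BijOn T.entry {b | T.Mem b} (Set.Icc 1 n)

theorem isStandard_iff {T : LRTableau} {n : ℕ} :
    T.IsStandard n ↔ (∀ b, T.Mem b → T.entry b ≤ n) ∧
      ∀ e, 1 ≤ e → e ≤ n → {b | T.Mem b ∧ T.entry b = e}.ncard = 1 := by
  constructor
  · intro hT
    refine ⟨fun b hb => (hT.mapsTo hb).2, fun e h1 h2 => ?_⟩
    obtain ⟨b, hb, rfl⟩ := hT.surjOn ⟨h1, h2⟩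
    exact Set.ncard_eq_one.2 ⟨b, Set.eq_singleton_iff_unique_mem.2
      ⟨⟨hb, rfl⟩, fun x hx => hT.injOn hx.1 hb hx.2⟩⟩
  · rintro ⟨hle, hone⟩
    refine ⟨fun b hb => ⟨T.entry_pos b hb.1 hb.2, hle b hb⟩, fun b hb b' hb' he => ?_,
      fun e he => ?_⟩
    · obtain ⟨a, ha⟩ := Set.ncard_eq_one.1 (hone _ (T.entry_pos b hb.1 hb.2) (hle b hb))
      have h1 : b ∈ {x | T.Mem x ∧ T.entry x = T.entry b} := ⟨hb, rfl⟩
      have h2 : b' ∈ {x | T.Mem x ∧ T.entry x = T.entry b} := ⟨hb', he.symm⟩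
      rw [ha, Set.mem_singleton_iff] at h1 h2
      rw [h1, h2]
    · obtain ⟨b, hb, hbe⟩ :=
        Set.nonempty_of_ncard_ne_zero (by rw [hone e he.1 he.2]; exact one_ne_zero)
      exact ⟨b, hb, hbe⟩

namespace IsStandard

variable {T : LRTableau} {n : ℕ} (hT : T.IsStandard n)
include hT

theorem col_le_of_entry_eq_add_one {b b' : ℕ × ℕ} (hb : T.Mem b) (hb' : T.Mem b')
    (h : T.entry b' = T.entry b + 1) : b'.2 ≤ b.2 := by
  by_contra! hlt
  have hlat := T.lattice (b.2 + 1) (T.entry b) (T.entry_pos b hb.1 hb.2)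
  have hL : {x : ℕ × ℕ | T.inner x.1 ≤ x.2 ∧ x.2 < T.outer x.1 ∧ b.2 + 1 ≤ x.2 ∧
      T.entry x = T.entry b + 1} = {b'} :=
    Set.eq_singleton_iff_unique_mem.2 ⟨⟨hb'.1, hb'.2, hlt, h⟩,
      fun x hx => hT.injOn ⟨hx.1, hx.2.1⟩ hb' (hx.2.2.2.trans h.symm)⟩
  have hR : {x : ℕ × ℕ | T.inner x.1 ≤ x.2 ∧ x.2 < T.outer x.1 ∧ b.2 + 1 ≤ x.2 ∧
      T.entry x = T.entry b} = ∅ := Set.eq_empty_iff_forall_notMem.2 fun x hx => by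
    have hxb : x = b := hT.injOn ⟨hx.1, hx.2.1⟩ hb hx.2.2.2
    have := hx.2.2.1
    rw [hxb] at this
    omega
  rw [hL, hR, Set.ncard_singleton, Set.ncard_empty] at hlat
  omega

theorem col_le_of_entry_le {b b' : ℕ × ℕ} (hb : T.Mem b) (hb' : T.Mem b')
    (h : T.entry b ≤ T.entry b') : b'.2 ≤ b.2 := by
  suffices ∀ v, T.entry b ≤ v → ∀ b', T.Mem b' → T.entry b' = v → b'.2 ≤ b.2 from
    this _ h b' hb' rfl
  intro v hv
  induction v, hv using Nat.le_induction with
  | base => exact fun b' hb' he => by rw [hT.injOn hb' hb he]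
  | succ v hv ih =>
    intro b' hb' he
    have hvn : v + 1 ≤ n := he ▸ (hT.mapsTo hb').2
    obtain ⟨c, hc, hce⟩ := hT.surjOn ⟨(T.entry_pos b hb.1 hb.2).trans hv, by omega⟩
    exact (hT.col_le_of_entry_eq_add_one hc hb' (by rw [he, hce])).trans (ih c hc hce)

theorem outer_le_inner_add_one (r : ℕ) : T.outer r ≤ T.inner r + 1 := by
  by_contra! h
  have hb : T.Mem (r, T.inner r) := ⟨le_rfl, by dsimp only; omega⟩
  have hb' : T.Mem (r, T.inner r + 1) := ⟨Nat.le_succ _, h⟩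
  have := hT.col_le_of_entry_le hb hb' (T.row_weak r _ _ le_rfl (Nat.le_succ _) h)
  dsimp only at this
  omega

theorem entry_lt_of_readingKey_lt {b b' : ℕ × ℕ} (hb : T.Mem b) (hb' : T.Mem b')
    (h : readingKey b < readingKey b') : T.entry b < T.entry b' := by
  rcases readingKey_lt_readingKey.1 h with hcol | ⟨hcol, hrow⟩
  · by_contra! hle
    exact absurd (hT.col_le_of_entry_le hb' hb hle) (not_le.2 hcol)
  · obtain ⟨r, c⟩ := b
    obtain ⟨r', c'⟩ := b'
    dsimp only at hcol hrow
    subst hcol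
    exact T.col_strict r r' c hrow hb.1 hb.2 hb'.1 hb'.2

theorem entry_lt_entry_iff {b b' : ℕ × ℕ} (hb : T.Mem b) (hb' : T.Mem b') :
    T.entry b < T.entry b' ↔ readingKey b < readingKey b' := by
  refine ⟨fun h => ?_, hT.entry_lt_of_readingKey_lt hb hb'⟩
  rcases lt_trichotomy (readingKey b) (readingKey b') with hlt | heq | hgt
  · exact hlt
  · rw [readingKey_injective heq] at h
    exact absurd h (lt_irrefl _)
  · exact absurd (hT.entry_lt_of_readingKey_lt hb' hb hgt) (lt_asymm h)

theorem entry_eq_ncard_add_one {b : ℕ × ℕ} (hb : T.Mem b) :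
    T.entry b = {b' | T.Mem b' ∧ readingKey b' < readingKey b}.ncard + 1 := by
  rw [← hT.ncard_setOf_lt_add_one hb]
  congr 2
  ext b'
  exact and_congr_right fun hb' => hT.entry_lt_entry_iff hb' hb

theorem eq_of_mem_iff {U : LRTableau} {m : ℕ} (hU : U.IsStandard m)
    (houter : T.outer = U.outer) (hmem : ∀ b, T.Mem b ↔ U.Mem b) : T = U := by
  refine ext houter (inner_eq_of_mem_iff houter hmem) (funext fun b => ?_)
  by_cases hb : T.Mem b
  · rw [hT.entry_eq_ncard_add_one hb, hU.entry_eq_ncard_add_one ((hmem b).1 hb)]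
    simp_rw [hmem]
  · rw [T.entry_zero b hb, U.entry_zero b (mt (hmem b).2 hb)]

end IsStandard

theorem lattice_of_bijOn {p : ℕ × ℕ → Prop} {e : ℕ × ℕ → ℕ} {n : ℕ}
    (he : Set.BijOn e {b | p b} (Set.Icc 1 n))
    (hcol : ∀ b b', p b → p b' → e b ≤ e b' → b'.2 ≤ b.2) (c k : ℕ) (hk : 1 ≤ k) :
    {b | p b ∧ c ≤ b.2 ∧ e b = k + 1}.ncard ≤ {b | p b ∧ c ≤ b.2 ∧ e b = k}.ncard := by
  rcases Set.eq_empty_or_nonempty {b | p b ∧ c ≤ b.2 ∧ e b = k + 1} with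
    hL | ⟨b', hb', hcb', hkb'⟩
  · rw [hL, Set.ncard_empty]
    exact Nat.zero_le _
  obtain ⟨b, hb, hkb⟩ := he.surjOn ⟨hk, by have := (he.mapsTo hb').2; omega⟩
  have hL : {b | p b ∧ c ≤ b.2 ∧ e b = k + 1} = {b'} := Set.eq_singleton_iff_unique_mem.2
    ⟨⟨hb', hcb', hkb'⟩, fun x hx => he.injOn hx.1 hb' (hx.2.2.trans hkb'.symm)⟩
  have hR : {b | p b ∧ c ≤ b.2 ∧ e b = k} = {b} := Set.eq_singleton_iff_unique_mem.2
    ⟨⟨hb, hcb'.trans (hcol b b' hb hb' (by omega)), hkb⟩,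
      fun x hx => he.injOn hx.1 hb (hx.2.2.trans hkb.symm)⟩
  rw [hL, hR, Set.ncard_singleton, Set.ncard_singleton]

section ColumnCounts

variable {nn : ℕ} {β : Fin nn → ℕ}

def tailSum (nn : ℕ) (F : ℕ → ℕ) (c : ℕ) : ℕ := ∑ j ∈ Ico c nn, F j

theorem tailSum_eq_add {F : ℕ → ℕ} {c : ℕ} (h : c < nn) :
    tailSum nn F c = F c + tailSum nn F (c + 1) :=
  sum_eq_sum_Ico_succ_bot h F

theorem tailSum_antitone {F : ℕ → ℕ} : Antitone (tailSum nn F) := fun _ _ h =>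
  sum_le_sum_of_subset (Ico_subset_Ico h le_rfl)

theorem tailSum_eq_zero {F : ℕ → ℕ} {c : ℕ} (h : nn ≤ c) : tailSum nn F c = 0 := by
  rw [tailSum, Ico_eq_empty_of_le h, sum_empty]

variable (β) in
def InColumnBottom (F : ℕ → ℕ) (b : ℕ × ℕ) : Prop :=
  colHeight β b.2 - F b.2 ≤ b.1 ∧ b.1 < colHeight β b.2

instance {F : ℕ → ℕ} : DecidablePred (InColumnBottom β F) := fun _ => instDecidableAnd

variable (β) in
def innerOf (F : ℕ → ℕ) (r : ℕ) : ℕ :=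
  if InColumnBottom β F (r, rowLength β r - 1) then rowLength β r - 1 else rowLength β r

variable (β) in
/-- Column `c` receives the entries `tailSum nn F (c + 1) + 1, …, tailSum nn F c` from top to
bottom, so the filled boxes are numbered along the reading order. -/
def entryOf (F : ℕ → ℕ) (b : ℕ × ℕ) : ℕ :=
  if InColumnBottom β F b then
    tailSum nn F (b.2 + 1) + (b.1 - (colHeight β b.2 - F b.2)) + 1
  else 0

variable {F : ℕ → ℕ}

theorem InColumnBottom.lt {b : ℕ × ℕ} (h : InColumnBottom β F b) : b.2 < nn := by
  by_contra hc
  have := h.2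
  rw [colHeight_eq_zero (not_lt.1 hc)] at this
  omega

theorem innerOf_le_rowLength {r : ℕ} : innerOf β F r ≤ rowLength β r := by
  unfold innerOf
  split_ifs <;> omega

theorem rowLength_sub_one_le_innerOf {r : ℕ} : rowLength β r - 1 ≤ innerOf β F r := by
  unfold innerOf
  split_ifs <;> omega

theorem innerOf_antitone (hβ : Antitone β) : Antitone (innerOf β F) := by
  intro r s hrs
  rcases (rowLength_antitone (β := β) hrs).lt_or_eq with hlt | heq
  · have := innerOf_le_rowLength (β := β) (F := F) (r := s)
    have := rowLength_sub_one_le_innerOf (β := β) (F := F) (r := r)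
    omega
  · unfold innerOf
    rw [heq]
    by_cases hr : InColumnBottom β F (r, rowLength β r - 1)
    · have hpos := (lt_rowLength_iff hβ).2 hr.2
      have hs : InColumnBottom β F (s, rowLength β r - 1) :=
        ⟨hr.1.trans hrs, (lt_rowLength_iff hβ).1 (by rw [heq]; omega)⟩
      rw [if_pos hr, if_pos hs]
    · rw [if_neg hr]
      split_ifs <;> omega

theorem entryOf_bounds {b : ℕ × ℕ} (h : InColumnBottom β F b) :
    tailSum nn F (b.2 + 1) < entryOf β F b ∧ entryOf β F b ≤ tailSum nn F b.2 := by
  rw [entryOf, if_pos h, tailSum_eq_add h.lt]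
  have := h.1
  have := h.2
  omega

theorem col_le_of_entryOf_le {b b' : ℕ × ℕ} (hb : InColumnBottom β F b)
    (hb' : InColumnBottom β F b') (h : entryOf β F b ≤ entryOf β F b') : b'.2 ≤ b.2 := by
  by_contra! hlt
  have := tailSum_antitone (nn := nn) (F := F) (show b.2 + 1 ≤ b'.2 from hlt)
  have := entryOf_bounds hb
  have := entryOf_bounds hb'
  omega

theorem entryOf_injOn : Set.InjOn (entryOf β F) {b | InColumnBottom β F b} := by
  intro b hb b' hb' h
  have hcol := le_antisymm (col_le_of_entryOf_le hb' hb h.ge) (col_le_of_entryOf_le hb hb' h.le)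
  obtain ⟨r, c⟩ := b
  obtain ⟨r', c'⟩ := b'
  dsimp only at hcol
  subst hcol
  have h1 : colHeight β c - F c ≤ r := hb.1
  have h2 : colHeight β c - F c ≤ r' := hb'.1
  rw [entryOf, entryOf, if_pos (show InColumnBottom β F (r, c) from hb),
    if_pos (show InColumnBottom β F (r', c) from hb')] at h
  dsimp only at h
  rw [Prod.mk.injEq]
  omega

theorem eq_of_inColumnBottom_iff {F' : ℕ → ℕ} (hF : ∀ c, F c ≤ colHeight β c)
    (hF' : ∀ c, F' c ≤ colHeight β c)
    (h : ∀ b, InColumnBottom β F b ↔ InColumnBottom β F' b) :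
    F = F' := by
  funext c
  have key : ∀ {F F' : ℕ → ℕ}, (∀ c, F' c ≤ colHeight β c) →
      (∀ b, InColumnBottom β F b ↔ InColumnBottom β F' b) → F' c ≤ F c := by
    intro F F' hF' h
    by_contra! hlt
    have : colHeight β c - F c ≤ colHeight β c - F' c :=
      ((h (colHeight β c - F' c, c)).2 ⟨le_rfl, by have := hF' c; dsimp only; omega⟩).1
    have := hF' c
    omega
  exact le_antisymm (key hF fun b => (h b).symm) (key hF' h)

variable (hF : ∀ c, F c + colHeight β (c + 1) ≤ colHeight β c)
include hF

theorem exists_entryOf_eq {v : ℕ} (hv : 1 ≤ v) (hvn : v ≤ tailSum nn F 0) :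
    ∃ b, InColumnBottom β F b ∧ entryOf β F b = v := by
  have hex : ∃ c, tailSum nn F (c + 1) < v :=
    ⟨nn, by rw [tailSum_eq_zero (Nat.le_succ nn)]; omega⟩
  obtain ⟨c, hc1, hc2⟩ : ∃ c, tailSum nn F (c + 1) < v ∧ v ≤ tailSum nn F c := by
    refine ⟨Nat.find hex, Nat.find_spec hex, ?_⟩
    cases h : Nat.find hex with
    | zero => exact hvn
    | succ c => exact not_lt.1 (Nat.find_min hex (by omega))
  have hcn : c < nn := by
    by_contra hcn
    rw [tailSum_eq_zero (not_lt.1 hcn)] at hc2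
    omega
  have hsum := tailSum_eq_add (F := F) hcn
  have hFc := hF c
  have hbottom : InColumnBottom β F (colHeight β c - F c + (v - tailSum nn F (c + 1) - 1), c) :=
    ⟨by dsimp only; omega, by dsimp only; omega⟩
  refine ⟨_, hbottom, ?_⟩
  rw [entryOf, if_pos hbottom]
  dsimp only
  omega

theorem bijOn_entryOf :
    Set.BijOn (entryOf β F) {b | InColumnBottom β F b} (Set.Icc 1 (tailSum nn F 0)) :=
  ⟨fun _ hb => ⟨by have := entryOf_bounds hb; omega,
      (entryOf_bounds hb).2.trans (tailSum_antitone (Nat.zero_le _))⟩,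
    entryOf_injOn, fun _ hv => exists_entryOf_eq hF hv.1 hv.2⟩

end ColumnCounts

section Construction

variable {nn : ℕ} {β : Fin nn → ℕ} (hβ : Antitone β) {F : ℕ → ℕ}
  (hF : ∀ c, F c + colHeight β (c + 1) ≤ colHeight β c)
include hβ hF

theorem InColumnBottom.rowLength_eq {b : ℕ × ℕ} (h : InColumnBottom β F b) :
    rowLength β b.1 = b.2 + 1 := by
  have h1 : b.2 < rowLength β b.1 := (lt_rowLength_iff hβ).2 h.2
  have h2 : ¬b.2 + 1 < rowLength β b.1 := by
    rw [lt_rowLength_iff hβ]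
    have := hF b.2
    have := h.1
    omega
  omega

theorem innerOf_le_and_lt_rowLength_iff {b : ℕ × ℕ} :
    innerOf β F b.1 ≤ b.2 ∧ b.2 < rowLength β b.1 ↔ InColumnBottom β F b := by
  obtain ⟨r, c⟩ := b
  dsimp only
  constructor
  · rintro ⟨h1, h2⟩
    unfold innerOf at h1
    split_ifs at h1 with h
    · rwa [show c = rowLength β r - 1 by omega]
    · omega
  · intro h
    have hlen : rowLength β r = c + 1 := h.rowLength_eq hβ hF
    refine ⟨?_, by omega⟩
    unfold innerOf
    rw [hlen, Nat.add_sub_cancel, if_pos h]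

def ofColumnCounts : LRTableau where
  outer := rowLength β
  inner := innerOf β F
  outer_anti := rowLength_antitone
  inner_anti := innerOf_antitone hβ
  inner_le _ := innerOf_le_rowLength
  finite := ⟨colHeight β 0, fun r hr => by
    have := (lt_rowLength_iff hβ (r := r) (c := 0)).not
    omega⟩
  entry := entryOf β F
  entry_zero b hb := by
    rw [entryOf, if_neg (mt (innerOf_le_and_lt_rowLength_iff hβ hF).2 hb)]
  entry_pos b h1 h2 := by
    rw [entryOf, if_pos ((innerOf_le_and_lt_rowLength_iff hβ hF (b := b)).1 ⟨h1, h2⟩)]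
    omega
  row_weak r c c' h1 h2 h3 := by
    have := rowLength_sub_one_le_innerOf (β := β) (F := F) (r := r)
    rw [show c' = c by omega]
  col_strict r r' c hrr h1 h2 h3 h4 := by
    have hb := (innerOf_le_and_lt_rowLength_iff hβ hF (b := (r, c))).1 ⟨h1, h2⟩
    have hb' := (innerOf_le_and_lt_rowLength_iff hβ hF (b := (r', c))).1 ⟨h3, h4⟩
    have := hb.1
    rw [entryOf, entryOf, if_pos hb, if_pos hb']
    dsimp only at this ⊢
    omega
  lattice c k hk := by
    have hset : ∀ v, {b : ℕ × ℕ | innerOf β F b.1 ≤ b.2 ∧ b.2 < rowLength β b.1 ∧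
        c ≤ b.2 ∧ entryOf β F b = v} =
          {b | InColumnBottom β F b ∧ c ≤ b.2 ∧ entryOf β F b = v} :=
      fun v => Set.ext fun b => by
        simp only [Set.mem_ofPred_eq, ← innerOf_le_and_lt_rowLength_iff hβ hF, and_assoc]
    rw [hset, hset]
    exact lattice_of_bijOn (bijOn_entryOf hF)
      (fun b b' hb hb' h => col_le_of_entryOf_le hb hb' h) c k hk

theorem mem_ofColumnCounts {b : ℕ × ℕ} :
    (ofColumnCounts hβ hF).Mem b ↔ InColumnBottom β F b :=
  innerOf_le_and_lt_rowLength_iff hβ hF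

theorem isStandard_ofColumnCounts : (ofColumnCounts hβ hF).IsStandard (tailSum nn F 0) := by
  have hset : {b | (ofColumnCounts hβ hF).Mem b} = {b | InColumnBottom β F b} :=
    Set.ext fun _ => mem_ofColumnCounts hβ hF
  rw [IsStandard, hset]
  exact bijOn_entryOf hF

end Construction

section Classification

variable {nn : ℕ} {β : Fin nn → ℕ} (hβ : Antitone β)

variable (β) in
def columnCount (T : LRTableau) (c : ℕ) : ℕ :=
  #{r ∈ Ico (colHeight β (c + 1)) (colHeight β c) | T.inner r ≤ c}

include hβ

theorem columnCount_add_le (T : LRTableau) (c : ℕ) :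
    columnCount β T c + colHeight β (c + 1) ≤ colHeight β c := by
  have := card_filter_le (Ico (colHeight β (c + 1)) (colHeight β c)) fun r => T.inner r ≤ c
  rw [Nat.card_Ico] at this
  have := colHeight_antitone hβ (show c ≤ c + 1 by omega)
  unfold columnCount
  omega

theorem IsStandard.mem_iff_inColumnBottom {T : LRTableau} {n : ℕ} (hT : T.IsStandard n)
    (houter : T.outer = rowLength β) {b : ℕ × ℕ} :
    T.Mem b ↔ InColumnBottom β (columnCount β T) b := by
  obtain ⟨r, c⟩ := b
  have hlast := hT.outer_le_inner_add_one r
  rw [houter] at hlast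
  have hrow : T.Mem (r, c) ↔
      r ∈ Ico (colHeight β (c + 1)) (colHeight β c) ∧ T.inner r ≤ c := by
    have h1 := lt_rowLength_iff hβ (r := r) (c := c)
    have h2 := lt_rowLength_iff hβ (r := r) (c := c + 1)
    change T.inner r ≤ c ∧ c < T.outer r ↔ _
    rw [mem_Ico, houter]
    omega
  have hmono : Monotone fun r => T.inner r ≤ c := fun _ _ h hr => (T.inner_anti h).trans hr
  have hcount := columnCount_add_le hβ T c
  rw [hrow]
  constructor
  · rintro ⟨hmem, hin⟩
    exact ⟨(hmono.iff_sub_card_filter_Ico_le hmem).1 hin, (mem_Ico.1 hmem).2⟩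
  · rintro ⟨h1, h2⟩
    have hmem : r ∈ Ico (colHeight β (c + 1)) (colHeight β c) :=
      mem_Ico.2 ⟨by dsimp only at h1; omega, h2⟩
    exact ⟨hmem, (hmono.iff_sub_card_filter_Ico_le hmem).2 h1⟩

end Classification

section Count

variable {nn : ℕ} {β : Fin nn → ℕ} (hβ : Antitone β)

variable (β) in
def toColumnCounts (f : ∀ i : Fin nn, Fin (1 + β i - colHeight β (i + 1))) (c : ℕ) : ℕ :=
  if h : c < nn then f ⟨c, h⟩ else 0

include hβ

theorem toColumnCounts_add_le (f : ∀ i : Fin nn, Fin (1 + β i - colHeight β (i + 1))) :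
    ∀ c, toColumnCounts β f c + colHeight β (c + 1) ≤ colHeight β c := by
  intro c
  have hanti := colHeight_antitone hβ (show c ≤ c + 1 by omega)
  unfold toColumnCounts
  split_ifs with hc
  · have : (f ⟨c, hc⟩ : ℕ) < 1 + β ⟨c, hc⟩ - colHeight β (c + 1) :=
      (f ⟨c, hc⟩).isLt
    have : colHeight β c = β ⟨c, hc⟩ := dif_pos hc
    omega
  · omega

def tableauOf (f : ∀ i : Fin nn, Fin (1 + β i - colHeight β (i + 1))) : LRTableau :=
  ofColumnCounts hβ (toColumnCounts_add_le hβ f)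

theorem tableauOf_injective : Function.Injective (tableauOf hβ) := by
  intro f f' h
  have hmem : ∀ b, (tableauOf hβ f).Mem b ↔ (tableauOf hβ f').Mem b := fun b => by rw [h]
  have hF := eq_of_inColumnBottom_iff
    (fun c => (Nat.le_add_right _ _).trans (toColumnCounts_add_le hβ f c))
    (fun c => (Nat.le_add_right _ _).trans (toColumnCounts_add_le hβ f' c))
    fun b => (mem_ofColumnCounts hβ _).symm.trans ((hmem b).trans (mem_ofColumnCounts hβ _))
  funext i
  exact Fin.ext (by simpa [toColumnCounts] using congrFun hF i)

theorem mem_range_tableauOf {T : LRTableau} :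
    T ∈ Set.range (tableauOf hβ) ↔ T.outer = rowLength β ∧ ∃ n, T.IsStandard n := by
  constructor
  · rintro ⟨f, rfl⟩
    exact ⟨rfl, _, isStandard_ofColumnCounts hβ _⟩
  · rintro ⟨houter, n, hT⟩
    let f : ∀ i : Fin nn, Fin (1 + β i - colHeight β (i + 1)) := fun i =>
      ⟨columnCount β T i, by
        have := columnCount_add_le hβ T i
        have : colHeight β i = β i := dif_pos i.isLt
        omega⟩
    have hf : toColumnCounts β f = columnCount β T := funext fun c => by
      unfold toColumnCounts
      split_ifs with hc
      · rfl
      · have := columnCount_add_le hβ T c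
        rw [colHeight_eq_zero (not_lt.1 hc)] at this
        omega
    refine ⟨f, (hT.eq_of_mem_iff (isStandard_ofColumnCounts hβ _) houter fun b => ?_).symm⟩
    rw [hT.mem_iff_inColumnBottom hβ houter, ← hf]
    exact (mem_ofColumnCounts hβ _).symm

theorem ncard_range_tableauOf :
    (Set.range (tableauOf hβ)).ncard = ∏ i : Fin nn, (1 + β i - colHeight β (i + 1)) := by
  rw [← Set.image_univ, Set.ncard_image_of_injective _ (tableauOf_injective hβ), Set.ncard_univ,
    Nat.card_eq_fintype_card, Fintype.card_pi]
  simp only [Fintype.card_fin]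

end Count

end LRTableau

theorem stmt15_general (nn : ℕ) (β : Fin nn → ℕ)
    (hanti : ∀ i j : Fin nn, i ≤ j → β j ≤ β i) :
    Set.ncard {T : LRTableau |
        (∀ r : ℕ, T.outer r = (Finset.univ.filter fun i : Fin nn => r < β i).card) ∧
        ∃ rmax : ℕ, (∀ b : ℕ × ℕ, T.Mem b → T.entry b ≤ rmax) ∧
          ∀ e : ℕ, 1 ≤ e → e ≤ rmax →
            Set.ncard {b : ℕ × ℕ | T.Mem b ∧ T.entry b = e} = 1} =
      ∏ i : Fin nn,
        (1 + β i - (if h : (i : ℕ) + 1 < nn then β ⟨(i : ℕ) + 1, h⟩ else 0)) := by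
  have hβ : Antitone β := hanti
  convert LRTableau.ncard_range_tableauOf hβ using 2
  · ext T
    rw [LRTableau.mem_range_tableauOf hβ, funext_iff]
    simp only [LRTableau.isStandard_iff]
    rfl
  · rfl

/-- The number of LR-tableaux with outer shape `β` (a partition with positive
parts `β 0 ≥ β 1 ≥ ⋯`, the parts being drawn as the column heights of the
diagram, so that the `r`-th row of the diagram has length `#{i | β i > r}`)
in which every entry occurs exactly once equals `∏ i (1 + β i − β (i+1))`
(with `β (i+1) = 0` past the end). -/
theorem stmt15 (nn : ℕ) (β : Fin nn → ℕ)
    (hanti : ∀ i j : Fin nn, i ≤ j → β j ≤ β i) (hpos : ∀ i, 0 < β i) :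
    Set.ncard {T : LRTableau |
        (∀ r : ℕ, T.outer r = (Finset.univ.filter fun i : Fin nn => r < β i).card) ∧
        ∃ rmax : ℕ, (∀ b : ℕ × ℕ, T.Mem b → T.entry b ≤ rmax) ∧
          ∀ e : ℕ, 1 ≤ e → e ≤ rmax →
            Set.ncard {b : ℕ × ℕ | T.Mem b ∧ T.entry b = e} = 1} =
      ∏ i : Fin nn,
        (1 + β i - (if h : (i : ℕ) + 1 < nn then β ⟨(i : ℕ) + 1, h⟩ else 0)) :=
  stmt15_general nn β hanti
end

section
/- Let B be a finite length Λ-module and a ∈ B with height sequence having gaps exactly after m_{i₁} > ⋯ > m_{i_s}; set ℓ_j = m_{i_j} − i_j and k_j = m_{i_j} + 1 − ℓ_j. Then the End(B)-submodule generated by a equals Σ_{j=1}^s (rad^{ℓ_j} B ∩ soc^{k_j} B) = Σ_{j=1}^s (p^{ℓ_j} B ∩ ann_B(p^{k_j})). -/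
/-!
Decompose `B` as a finite direct sum of cyclic modules `Λ ⧸ (p ^ e)`; in such a module every
nonzero element is `p ^ w * u` with `u` a unit and `w < e`, and its height is exactly `w`.

Endomorphisms preserve `p ^ ℓ B` and `B[p ^ k]`, so the sum is fully invariant. It contains `a`:
if a component `y` of `a` has height `v` and `p ^ t y` is its last nonzero multiple, then
`p ^ t y` has height `v + t ≥ m t`, and the first gap `i_j ≥ t` has `ℓ_j = m t - t ≤ v` and
`k_j = i_j + 1 > t`.

Conversely, if `p ^ i a` has height exactly `M`, some component `y` of `a` must have `p ^ i y` of
height exactly `M`, which forces `y = p ^ (M - i) * u` in `Λ ⧸ (p ^ e)` with `M < e`. For any `c`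
killed by `p ^ (M + 1)`, sending the generator to `u⁻¹ • c` and composing with the projection is
an endomorphism taking `a` to `p ^ (M - i) • c`.
-/

open Submodule

section Height

variable {Λ B C : Type} [CommRing Λ] [AddCommGroup B] [Module Λ B] [AddCommGroup C] [Module Λ C]
  {p : Λ} {b : B} {M N : ℕ}

theorem inPow_zero_right (p : Λ) (N : ℕ) : inPow p N (0 : B) := ⟨0, (smul_zero _).symm⟩

theorem inPow.mono (h : inPow p N b) (hMN : M ≤ N) : inPow p M b := by
  obtain ⟨c, rfl⟩ := h
  exact ⟨p ^ (N - M) • c, by rw [smul_smul, ← pow_add, Nat.add_sub_cancel' hMN]⟩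

theorem inPow.smul (h : inPow p N b) : inPow p (N + 1) (p • b) := by
  obtain ⟨c, rfl⟩ := h
  exact ⟨c, by rw [smul_smul, ← pow_succ']⟩

theorem inPow.map (h : inPow p N b) (f : B →ₗ[Λ] C) : inPow p N (f b) := by
  obtain ⟨c, rfl⟩ := h
  exact ⟨f c, map_smul f _ c⟩

theorem inPow_of_forall_inPow_apply {ι : Type} [Fintype ι] {Q : ι → Type}
    [∀ j, AddCommGroup (Q j)] [∀ j, Module Λ (Q j)] {π : ∀ j, B →ₗ[Λ] Q j} {σ : ∀ j, Q j →ₗ[Λ] B}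
    (hsum : ∀ b, ∑ j, σ j (π j b) = b) (h : ∀ j, inPow p N (π j b)) : inPow p N b := by
  choose c hc using h
  exact ⟨∑ j, σ j (c j), by simp only [Finset.smul_sum, ← map_smul, ← hc, hsum]⟩

theorem mem_span_pow_smul_top_iff_inPow :
    b ∈ Ideal.span {p ^ N} • (⊤ : Submodule Λ B) ↔ inPow p N b := by
  simp [inPow, ideal_span_singleton_smul, mem_smul_pointwise_iff_exists, eq_comm]

theorem not_heightIs_zero : ¬ heightIs p (0 : B) M := fun h => h.2 (inPow_zero_right p _)

theorem heightIs.le_of_inPow (h : heightIs p b M) (hN : inPow p N b) : N ≤ M := by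
  by_contra! hlt
  exact h.2 (hN.mono hlt)

theorem heightIs.succ_le (h : heightIs p b M) (h' : heightIs p (p • b) N) : M + 1 ≤ N :=
  h'.le_of_inPow h.1.smul

theorem succ_le_of_heightIs_pow_smul {a : B} {n : ℕ} {m : ℕ → ℕ}
    (hgt : ∀ i ≤ n, heightIs p (p ^ i • a) (m i)) : ∀ t < n, m t + 1 ≤ m (t + 1) := fun t ht =>
  (hgt t ht.le).succ_le (by rw [smul_smul, ← pow_succ']; exact hgt (t + 1) ht)

theorem map_span_singleton_smul_top_inf_torsionBy_le (f : B →ₗ[Λ] C) (r s : Λ) :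
    (Ideal.span {r} • (⊤ : Submodule Λ B) ⊓ torsionBy Λ B s).map f ≤
      Ideal.span {r} • (⊤ : Submodule Λ C) ⊓ torsionBy Λ C s := by
  refine (map_inf_le f).trans (inf_le_inf ?_ ?_)
  · rw [map_smul'']
    exact smul_mono_right _ le_top
  · rintro _ ⟨x, hx, rfl⟩
    rw [SetLike.mem_coe, mem_torsionBy_iff] at hx
    rw [mem_torsionBy_iff, ← map_smul, hx, map_zero]

end Height

section Cyclic

variable {Λ : Type} [CommRing Λ] {p : Λ} {e : ℕ}

theorem pow_smul_mk_pow_mul (k w : ℕ) (u : Λ) :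
    p ^ k • (Submodule.Quotient.mk (p ^ w * u) : Λ ⧸ Λ ∙ p ^ e) =
      Submodule.Quotient.mk (p ^ (k + w) * u) := by
  rw [← Quotient.mk_smul, smul_eq_mul, ← mul_assoc, ← pow_add]

variable [IsDomain Λ]

theorem mk_pow_mul_unit_eq_zero_iff (hp : Irreducible p) (w : ℕ) (u : Λˣ) :
    (Submodule.Quotient.mk (p ^ w * (u : Λ)) : Λ ⧸ Λ ∙ p ^ e) = 0 ↔ e ≤ w := by
  rw [Submodule.Quotient.mk_eq_zero, ← Ideal.span, Ideal.mem_span_singleton, Units.dvd_mul_right,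
    pow_dvd_pow_iff hp.ne_zero hp.not_isUnit]

theorem inPow_mk_pow_mul_unit_iff (hp : Irreducible p) {w : ℕ} (hw : w < e) (u : Λˣ) {N : ℕ} :
    inPow p N (Submodule.Quotient.mk (p ^ w * (u : Λ)) : Λ ⧸ Λ ∙ p ^ e) ↔ N ≤ w := by
  refine ⟨fun ⟨c, hc⟩ => ?_, fun hN => ⟨Submodule.Quotient.mk (p ^ (w - N) * (u : Λ)), ?_⟩⟩
  · obtain ⟨c, rfl⟩ := Submodule.Quotient.mk_surjective _ c
    rw [← Quotient.mk_smul, Submodule.Quotient.eq, ← Ideal.span, Ideal.mem_span_singleton] at hc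
    by_contra! hwN
    have hdvd : p ^ (w + 1) ∣ p ^ w * u := by
      have h1 : p ^ (w + 1) ∣ p ^ e := pow_dvd_pow p hw
      have h2 : p ^ (w + 1) ∣ p ^ N • c := (pow_dvd_pow p hwN).mul_right c
      simpa using (h1.trans hc).add h2
    rw [Units.dvd_mul_right, pow_dvd_pow_iff hp.ne_zero hp.not_isUnit] at hdvd
    omega
  · rw [← Quotient.mk_smul, smul_eq_mul, ← mul_assoc, ← pow_add, Nat.add_sub_cancel' hN]

theorem heightIs_mk_pow_mul_unit_iff (hp : Irreducible p) {w : ℕ} (hw : w < e) (u : Λˣ) {N : ℕ} :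
    heightIs p (Submodule.Quotient.mk (p ^ w * (u : Λ)) : Λ ⧸ Λ ∙ p ^ e) N ↔ N = w := by
  rw [heightIs, inPow_mk_pow_mul_unit_iff hp hw, inPow_mk_pow_mul_unit_iff hp hw]
  omega

variable [IsDiscreteValuationRing Λ]

theorem exists_eq_mk_pow_mul_unit (hp : Irreducible p) {y : Λ ⧸ Λ ∙ p ^ e} (hy : y ≠ 0) :
    ∃ w < e, ∃ u : Λˣ, y = Submodule.Quotient.mk (p ^ w * (u : Λ)) := by
  obtain ⟨r, rfl⟩ := Submodule.Quotient.mk_surjective _ y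
  have hr : r ≠ 0 := by
    rintro rfl
    exact hy (Submodule.Quotient.mk_zero _)
  obtain ⟨w, u, rfl⟩ := IsDiscreteValuationRing.eq_unit_mul_pow_irreducible hr hp
  rw [mul_comm] at hy ⊢
  exact ⟨w, not_le.1 fun hew => hy ((mk_pow_mul_unit_eq_zero_iff hp w u).2 hew), u, rfl⟩

theorem eq_mk_of_heightIs_pow_smul (hp : Irreducible p) {y : Λ ⧸ Λ ∙ p ^ e} {i M : ℕ}
    (h : heightIs p (p ^ i • y) M) :
    M < e ∧ ∃ u : Λˣ, y = Submodule.Quotient.mk (p ^ (M - i) * (u : Λ)) := by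
  have hy : y ≠ 0 := by
    rintro rfl
    rw [smul_zero] at h
    exact not_heightIs_zero h
  obtain ⟨w, -, u, rfl⟩ := exists_eq_mk_pow_mul_unit hp hy
  rw [pow_smul_mk_pow_mul] at h
  have hiw : i + w < e := not_le.1 fun hle =>
    not_heightIs_zero (((mk_pow_mul_unit_eq_zero_iff hp _ u).2 hle) ▸ h)
  obtain rfl := (heightIs_mk_pow_mul_unit_iff hp hiw u).1 h
  exact ⟨hiw, u, by rw [Nat.add_sub_cancel_left]⟩

theorem exists_heightIs_of_ne_zero (hp : Irreducible p) {y : Λ ⧸ Λ ∙ p ^ e} (hy : y ≠ 0) :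
    ∃ v t, heightIs p y v ∧ p ^ (t + 1) • y = 0 ∧ heightIs p (p ^ t • y) (v + t) := by
  obtain ⟨v, hv, u, rfl⟩ := exists_eq_mk_pow_mul_unit hp hy
  refine ⟨v, e - 1 - v, (heightIs_mk_pow_mul_unit_iff hp hv u).2 rfl, ?_, ?_⟩
  · rw [pow_smul_mk_pow_mul, mk_pow_mul_unit_eq_zero_iff hp]
    omega
  · rw [pow_smul_mk_pow_mul, heightIs_mk_pow_mul_unit_iff hp (by omega)]
    omega

end Cyclic

section Decomposition

variable {Λ B : Type} [CommRing Λ] [IsDomain Λ] [IsDiscreteValuationRing Λ] {p : Λ}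
  [AddCommGroup B] [Module Λ B]

theorem isTorsion'_powers_of_isTorsion (hp : Irreducible p) (htor : Module.IsTorsion Λ B) :
    Module.IsTorsion' B (Submonoid.powers p) := by
  refine (isTorsion'_powers_iff p).2 fun x => ?_
  obtain ⟨⟨r, hr⟩, hrx⟩ := @htor x
  obtain ⟨k, u, rfl⟩ :=
    IsDiscreteValuationRing.eq_unit_mul_pow_irreducible (nonZeroDivisors.ne_zero hr) hp
  refine ⟨k, ?_⟩
  calc p ^ k • x = ((u⁻¹ : Λˣ) : Λ) • ((u : Λ) * p ^ k) • x := by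
        rw [smul_smul, ← mul_assoc, Units.inv_mul, one_mul]
    _ = 0 := by rw [← Submonoid.smul_def ⟨_, hr⟩ x, hrx, smul_zero]

theorem exists_cyclic_decomposition (hp : Irreducible p) [Module.Finite Λ B]
    (htor : Module.IsTorsion Λ B) :
    ∃ (d : ℕ) (e : Fin d → ℕ) (π : ∀ j, B →ₗ[Λ] Λ ⧸ Λ ∙ p ^ e j)
      (σ : ∀ j, (Λ ⧸ Λ ∙ p ^ e j) →ₗ[Λ] B), ∀ b, ∑ j, σ j (π j b) = b := by
  classical
  obtain ⟨d, e, ⟨φ⟩⟩ :=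
    Module.torsion_by_prime_power_decomposition hp (isTorsion'_powers_of_isTorsion hp htor)
  refine ⟨d, e, fun j => DirectSum.component Λ _ _ j ∘ₗ φ.toLinearMap,
    fun j => φ.symm.toLinearMap ∘ₗ DirectSum.lof Λ (Fin d) (fun i => Λ ⧸ Λ ∙ p ^ e i) j,
    fun b => ?_⟩
  simp only [LinearMap.comp_apply, LinearEquiv.coe_coe]
  rw [← map_sum]
  exact (congrArg φ.symm (DirectSum.sum_univ_of (φ b))).trans (φ.symm_apply_apply b)

end Decomposition

section GapSequence

variable {n s : ℕ} {m : ℕ → ℕ} {idx : Fin s → ℕ}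

theorem self_le_apply_of_succ_le (hstep : ∀ t < n, m t + 1 ≤ m (t + 1)) : ∀ t ≤ n, t ≤ m t := by
  intro t ht
  induction t with
  | zero => exact Nat.zero_le _
  | succ t ih =>
    have := hstep t ht
    have := ih (by omega)
    omega

theorem exists_gap_ge (hstep : ∀ t < n, m t + 1 ≤ m (t + 1))
    (hgaps : ∀ ℓ ≤ n, (ℓ = n ∨ m ℓ + 1 < m (ℓ + 1)) ↔ ∃ j, idx j = ℓ) {t : ℕ} (ht : t ≤ n) :
    ∃ j, t ≤ idx j ∧ idx j ≤ n ∧ m (idx j) + t = m t + idx j := by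
  induction hd : n - t generalizing t with
  | zero =>
    obtain ⟨j, hj⟩ := (hgaps n le_rfl).1 (Or.inl rfl)
    exact ⟨j, by omega, by omega, by rw [hj, show t = n by omega]⟩
  | succ d ih =>
    by_cases hgap : t = n ∨ m t + 1 < m (t + 1)
    · obtain ⟨j, rfl⟩ := (hgaps t ht).1 hgap
      exact ⟨j, le_rfl, ht, rfl⟩
    · obtain ⟨j, hj, hjn, hmj⟩ := ih (t := t + 1) (by omega) (by omega)
      have := hstep t (by omega)
      exact ⟨j, by omega, hjn, by omega⟩

end GapSequence

section EndomorphismSubmodule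

variable {Λ B : Type} [CommRing Λ] [AddCommGroup B] [Module Λ B] {p : Λ}
  {n s : ℕ} {m : ℕ → ℕ} {idx : Fin s → ℕ}

theorem mem_iSup_of_inPow (hstep : ∀ t < n, m t + 1 ≤ m (t + 1))
    (hgaps : ∀ ℓ ≤ n, (ℓ = n ∨ m ℓ + 1 < m (ℓ + 1)) ↔ ∃ j, idx j = ℓ) {b : B} {v t : ℕ}
    (hb : inPow p v b) (hbt : p ^ (t + 1) • b = 0) (ht : t ≤ n) (hmt : m t ≤ v + t) :
    b ∈ ⨆ j : Fin s, (Ideal.span {p ^ (m (idx j) - idx j)} • (⊤ : Submodule Λ B) ⊓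
      torsionBy Λ B (p ^ (m (idx j) + 1 - (m (idx j) - idx j)))) := by
  obtain ⟨j, htj, hjn, hmj⟩ := exists_gap_ge hstep hgaps ht
  have := self_le_apply_of_succ_le hstep _ hjn
  refine mem_iSup_of_mem j ⟨mem_span_pow_smul_top_iff_inPow.2 (hb.mono (by omega)), ?_⟩
  rw [SetLike.mem_coe, mem_torsionBy_iff,
    show m (idx j) + 1 - (m (idx j) - idx j) = idx j - t + (t + 1) by omega, pow_add, mul_smul,
    hbt, smul_zero]

variable [IsDomain Λ] [IsDiscreteValuationRing Λ] [Module.Finite Λ B]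

theorem mem_iSup_of_heightIs (hp : Irreducible p) (htor : Module.IsTorsion Λ B) {a : B}
    (hgt : ∀ i ≤ n, heightIs p (p ^ i • a) (m i)) (hzero : p ^ (n + 1) • a = 0)
    (hgaps : ∀ ℓ ≤ n, (ℓ = n ∨ m ℓ + 1 < m (ℓ + 1)) ↔ ∃ j, idx j = ℓ) :
    a ∈ ⨆ j : Fin s, (Ideal.span {p ^ (m (idx j) - idx j)} • (⊤ : Submodule Λ B) ⊓
      torsionBy Λ B (p ^ (m (idx j) + 1 - (m (idx j) - idx j)))) := by
  obtain ⟨d, e, π, σ, hsum⟩ := exists_cyclic_decomposition hp htor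
  rw [← hsum a]
  refine sum_mem fun j _ => ?_
  by_cases hy : π j a = 0
  · rw [hy, map_zero]
    exact zero_mem _
  obtain ⟨v, t, hv, hvt, ht⟩ := exists_heightIs_of_ne_zero hp hy
  have htn : t ≤ n := by
    by_contra! hnt
    rw [← Nat.sub_add_cancel hnt, pow_add, mul_smul, ← map_smul, hzero, map_zero, smul_zero] at ht
    exact not_heightIs_zero ht
  refine mem_iSup_of_inPow (succ_le_of_heightIs_pow_smul hgt) hgaps (hv.1.map (σ j)) ?_ htn
    (ht.le_of_inPow ?_)
  · rw [← map_smul, hvt, map_zero]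
  · simpa only [map_smul] using (hgt t htn).1.map (π j)

theorem exists_linearMap_apply_eq_pow_smul (hp : Irreducible p) (htor : Module.IsTorsion Λ B)
    {a c : B} {i M : ℕ} (ha : heightIs p (p ^ i • a) M) (hc : p ^ (M + 1) • c = 0) :
    ∃ f : B →ₗ[Λ] B, f a = p ^ (M - i) • c := by
  obtain ⟨d, e, π, σ, hsum⟩ := exists_cyclic_decomposition hp htor
  obtain ⟨j, hj⟩ : ∃ j, ¬ inPow p (M + 1) (p ^ i • π j a) := by
    by_contra! h
    exact ha.2 (inPow_of_forall_inPow_apply hsum fun j => by simpa only [map_smul] using h j)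
  obtain ⟨hMe, u, hu⟩ := eq_mk_of_heightIs_pow_smul hp
    ⟨by simpa only [map_smul] using ha.1.map (π j), hj⟩
  have hker : LinearMap.toSpanSingleton Λ B (((u⁻¹ : Λˣ) : Λ) • c) (p ^ e j) = 0 := by
    rw [LinearMap.toSpanSingleton_apply, smul_comm, ← Nat.sub_add_cancel hMe, pow_add, mul_smul,
      hc, smul_zero, smul_zero]
  refine ⟨liftQSpanSingleton _ _ hker ∘ₗ π j, ?_⟩
  rw [LinearMap.comp_apply, hu, liftQSpanSingleton_apply, LinearMap.toSpanSingleton_apply,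
    smul_smul, mul_assoc, Units.mul_inv, mul_one]

theorem exists_linearMap_apply_eq_of_mem (hp : Irreducible p) (htor : Module.IsTorsion Λ B)
    {a x : B} {i M : ℕ} (ha : heightIs p (p ^ i • a) M)
    (hx : x ∈ Ideal.span {p ^ (M - i)} • (⊤ : Submodule Λ B) ⊓
      torsionBy Λ B (p ^ (M + 1 - (M - i)))) :
    ∃ f : B →ₗ[Λ] B, f a = x := by
  obtain ⟨hx, hxt⟩ := hx
  obtain ⟨c, rfl⟩ := mem_span_pow_smul_top_iff_inPow.1 hx
  rw [SetLike.mem_coe, mem_torsionBy_iff, smul_smul, ← pow_add,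
    Nat.sub_add_cancel (by omega)] at hxt
  exact exists_linearMap_apply_eq_pow_smul hp htor ha hxt

end EndomorphismSubmodule

theorem stmt16_general (Λ : Type) [CommRing Λ] [IsDomain Λ] [IsDiscreteValuationRing Λ]
    (p : Λ) (hp : Irreducible p)
    (B : Type) [AddCommGroup B] [Module Λ B] [Module.Finite Λ B]
    (htor : Module.IsTorsion Λ B)
    (a : B) (n s : ℕ) (m : ℕ → ℕ)
    (hgt : ∀ i ≤ n, heightIs p (p ^ i • a) (m i))
    (hzero : p ^ (n + 1) • a = 0)
    (idx : Fin s → ℕ) (hle : ∀ j, idx j ≤ n)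
    (hgaps : ∀ ℓ ≤ n, (ℓ = n ∨ m ℓ + 1 < m (ℓ + 1)) ↔ ∃ j, idx j = ℓ) :
    sInf {N : Submodule Λ B | a ∈ N ∧ ∀ f : B →ₗ[Λ] B, N.map f ≤ N} =
      ⨆ j : Fin s,
        (Ideal.span {p ^ (m (idx j) - idx j)} • (⊤ : Submodule Λ B) ⊓
          Submodule.torsionBy Λ B (p ^ (m (idx j) + 1 - (m (idx j) - idx j)))) := by
  refine le_antisymm (sInf_le ⟨mem_iSup_of_heightIs hp htor hgt hzero hgaps, fun f => ?_⟩) ?_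
  · rw [Submodule.map_iSup]
    exact iSup_mono fun j => map_span_singleton_smul_top_inf_torsionBy_le f _ _
  · refine le_sInf fun N ⟨haN, hN⟩ => iSup_le fun j x hx => ?_
    obtain ⟨f, rfl⟩ := exists_linearMap_apply_eq_of_mem hp htor (hgt _ (hle j)) hx
    exact hN f (mem_map_of_mem haN)

/-- Let `a` be an element of a finite length `Λ`-module `B` whose height
sequence `(m i)` (finite entries for `i ≤ n`) has gaps exactly after
`m (idx 1) > ⋯ > m (idx s)`.  With `ℓ_j = m (idx j) − idx j` and
`k_j = m (idx j) + 1 − ℓ_j`, the `End(B)`-submodule generated by `a`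
(the smallest submodule containing `a` and stable under every endomorphism)
equals `Σ_j (p^{ℓ_j} B ∩ ann_B(p^{k_j}))`. -/
theorem stmt16 (Λ : Type) [CommRing Λ] [IsDomain Λ] [IsDiscreteValuationRing Λ]
    (p : Λ) (hp : Irreducible p)
    (B : Type) [AddCommGroup B] [Module Λ B] [Module.Finite Λ B]
    (htor : Module.IsTorsion Λ B)
    (a : B) (n s : ℕ) (m : ℕ → ℕ)
    (hgt : ∀ i ≤ n, heightIs p (p ^ i • a) (m i))
    (hzero : p ^ (n + 1) • a = 0)
    (idx : Fin s → ℕ) (hanti : StrictAnti idx) (hle : ∀ j, idx j ≤ n)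
    (hgaps : ∀ ℓ ≤ n, (ℓ = n ∨ m ℓ + 1 < m (ℓ + 1)) ↔ ∃ j, idx j = ℓ) :
    sInf {N : Submodule Λ B | a ∈ N ∧ ∀ f : B →ₗ[Λ] B, N.map f ≤ N} =
      ⨆ j : Fin s,
        (Ideal.span {p ^ (m (idx j) - idx j)} • (⊤ : Submodule Λ B) ⊓
          Submodule.torsionBy Λ B (p ^ (m (idx j) + 1 - (m (idx j) - idx j)))) :=
  stmt16_general Λ p hp B htor a n s m hgt hzero idx hle hgaps
end
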